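/- Suppose V is nonempty, ε > 0, and let γ* = max{ min_{1 ≤ i ≤ r} d(S, G_i) : S ⊆ V nonempty }. If 0 ≤ L < γ* ≤ (1 + ε)L and S₀ maximizes S ↦ min_{1 ≤ i ≤ r} m(S, G_i) − L|S| over all subsets S ⊆ V, then min_{1 ≤ i ≤ r} d(S₀, G_i) ≥ γ*/(1 + ε). -/

import Mathlib

/-- Number of edges of `G` with both endpoints in `S`. -/
noncomputable def edgeCnt {V : Type*} (G : SimpleGraph V) (S : Finset V) : ℕ :=
  {e ∈ G.edgeSet | ∀ v ∈ e, v ∈ S}.ncard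

/-- Density of the subgraph induced by `S` in `G`. -/
noncomputable def dens {V : Type*} (G : SimpleGraph V) (S : Finset V) : ℝ :=
  (edgeCnt G S : ℝ) / (S.card : ℝ)

/-- Total density across the graph snapshots. -/
noncomputable def densTot {V : Type*} {r : ℕ} (G : Fin r → SimpleGraph V) (S : Finset V) : ℝ :=
  ∑ i, dens (G i) S

/-- Difference between the maximum and minimum induced density. -/
noncomputable def densDiff {V : Type*} {r : ℕ} (G : Fin r → SimpleGraph V) (S : Finset V) : ℝ :=
  (⨆ i, dens (G i) S) - (⨅ i, dens (G i) S)

/-- Difference between the maximum and minimum induced edge count. -/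
noncomputable def edgeDiff {V : Type*} {r : ℕ} (G : Fin r → SimpleGraph V) (S : Finset V) : ℝ :=
  (⨆ i, (edgeCnt (G i) S : ℝ)) - (⨅ i, (edgeCnt (G i) S : ℝ))

/-!
Take `S` with `min_i d(S, G_i) = γ*`. Since `L < γ*`, the objective `min_i m(S, G_i) - L|S|` is
`(γ* - L)|S| > 0` at `S`, hence positive at the maximizer `S₀`. The empty set scores `0`, so `S₀` is
nonempty, and dividing by `|S₀|` gives `min_i d(S₀, G_i) > L ≥ γ*/(1+ε)`.
-/

noncomputable def minEdgeExcess {V ι : Type*} (G : ι → SimpleGraph V) (L : ℝ) (S : Finset V) :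
    ℝ :=
  (⨅ i, (edgeCnt (G i) S : ℝ)) - L * S.card

section

variable {V ι : Type*} (G : ι → SimpleGraph V) {L : ℝ} {S S₀ : Finset V}

lemma edgeCnt_empty (H : SimpleGraph V) : edgeCnt H ∅ = 0 := by
  have : {e ∈ H.edgeSet | ∀ v ∈ e, v ∈ (∅ : Finset V)} = ∅ :=
    Set.eq_empty_of_forall_notMem fun e he ↦ by simpa using he.2 _ (Sym2.out_fst_mem e)
  rw [edgeCnt, this, Set.ncard_empty]

lemma iInf_dens (S : Finset V) :
    ⨅ i, dens (G i) S = (⨅ i, (edgeCnt (G i) S : ℝ)) / S.card := by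
  unfold dens
  simp only [div_eq_mul_inv]
  exact (Real.iInf_mul_of_nonneg (by positivity) _).symm

lemma minEdgeExcess_empty (L : ℝ) : minEdgeExcess G L ∅ = 0 := by
  simp [minEdgeExcess, edgeCnt_empty, Real.iInf_const_zero]

lemma minEdgeExcess_pos_iff (hS : S.Nonempty) :
    0 < minEdgeExcess G L S ↔ L < ⨅ i, dens (G i) S := by
  rw [iInf_dens, lt_div_iff₀ (by exact_mod_cast hS.card_pos), minEdgeExcess, sub_pos]

lemma lt_iInf_dens_of_minEdgeExcess_le (hS : S.Nonempty) (hSL : L < ⨅ i, dens (G i) S)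
    (hle : minEdgeExcess G L S ≤ minEdgeExcess G L S₀) : L < ⨅ i, dens (G i) S₀ := by
  have hpos : 0 < minEdgeExcess G L S₀ := ((minEdgeExcess_pos_iff G hS).2 hSL).trans_le hle
  have hS₀ : S₀.Nonempty := by
    rw [Finset.nonempty_iff_ne_empty]
    rintro rfl
    simp [minEdgeExcess_empty] at hpos
  exact (minEdgeExcess_pos_iff G hS₀).1 hpos

end

theorem stmt13_general {V : Type*} {r : ℕ}
    (G : Fin r → SimpleGraph V) (ε L γstar : ℝ) (hε : 0 < ε)
    (hstar : IsGreatest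
      {x : ℝ | ∃ S : Finset V, S.Nonempty ∧ (⨅ i, dens (G i) S) = x} γstar)
    (hL : L < γstar) (hU : γstar ≤ (1 + ε) * L)
    (S₀ : Finset V)
    (hmax : ∀ S : Finset V,
      (⨅ i, (edgeCnt (G i) S : ℝ)) - L * (S.card : ℝ) ≤
        (⨅ i, (edgeCnt (G i) S₀ : ℝ)) - L * (S₀.card : ℝ)) :
    γstar / (1 + ε) ≤ ⨅ i, dens (G i) S₀ := by
  obtain ⟨S, hS, hSγ⟩ := hstar.1
  have hL_lt : L < ⨅ i, dens (G i) S₀ :=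
    lt_iInf_dens_of_minEdgeExcess_le G hS (hSγ ▸ hL) (hmax S)
  calc γstar / (1 + ε) ≤ L := by
        rw [div_le_iff₀ (by linarith)]
        linarith
    _ ≤ _ := hL_lt.le

theorem stmt13 {V : Type*} [Fintype V] [Nonempty V] {r : ℕ} (hr : 1 ≤ r)
    (G : Fin r → SimpleGraph V) (ε L γstar : ℝ) (hε : 0 < ε)
    (hstar : IsGreatest
      {x : ℝ | ∃ S : Finset V, S.Nonempty ∧ (⨅ i, dens (G i) S) = x} γstar)
    (hL0 : 0 ≤ L) (hL : L < γstar) (hU : γstar ≤ (1 + ε) * L)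
    (S₀ : Finset V)
    (hmax : ∀ S : Finset V,
      (⨅ i, (edgeCnt (G i) S : ℝ)) - L * (S.card : ℝ) ≤
        (⨅ i, (edgeCnt (G i) S₀ : ℝ)) - L * (S₀.card : ℝ)) :
    γstar / (1 + ε) ≤ ⨅ i, dens (G i) S₀ :=
  stmt13_general G ε L γstar hε hstar hL hU S₀ hmax
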